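/- arXiv:2510.07470 — 2 statements merged into one kernel-verified Lean document; each statement's English description precedes it below -/
import Mathlib

section
/- (Decrease under large gradient mapping.) Let f, g : ℝ^d → ℝ be differentiable with L_f- and L_g-Lipschitz gradients respectively, L = L_f + L_g, F = f + g, θ ∈ (0,1], and 0 < η ≤ 1/(8L). Let x^{−1} = x⁰, x¹, …, x^𝒦 and z⁰, …, z^{𝒦−1} (𝒦 ≥ 1) be an inertial proximal epoch. Let B > 0 and assume that (𝒦−1)·Σ_{t=0}^{𝒦−2}‖x^{t+1} − x^t‖² ≤ B² (vacuous when 𝒦 = 1) and that the gradient mapping at the last iterate is large: ‖z^{𝒦−1} − x^𝒦‖ ≥ B. Then F(x^𝒦) − F(x⁰) ≤ −B²/(8η). -/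
/-!
For one prox-gradient step from `z` to `x'`, the descent lemma for `f` at `x'` and for `g` around
`z`, together with the optimality condition `(z - x') / η = ∇f x' + ∇g z` and the three-point
identity `2⟪z - x', x' - x⟫ = ‖z - x‖² - ‖z - x'‖² - ‖x' - x‖²`, gives
`8η (F x' - F x) ≤ 5‖z - x‖² - 3‖z - x'‖² - 3‖x' - x‖²` as soon as `8ηL ≤ 1`.
Along an inertial epoch `‖zᵏ - xᵏ‖ ≤ ‖xᵏ - xᵏ⁻¹‖`, so after telescoping the momentum terms are
absorbed except for `2 ∑ ‖xᵗ⁺¹ - xᵗ‖² ≤ 2B²`, while the last gradient mapping contributes `-3B²`.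
-/

open Finset RealInnerProductSpace

lemma nonneg_of_norm_sub_le_mul_norm_sub {E F : Type*} [SeminormedAddCommGroup E]
    [SeminormedAddCommGroup F] {φ : E → F} {C : ℝ}
    (h : ∀ a b, ‖φ a - φ b‖ ≤ C * ‖a - b‖) {a b : E} (hab : 0 < ‖a - b‖) : 0 ≤ C :=
  nonneg_of_mul_nonneg_left ((norm_nonneg _).trans (h a b)) hab

theorem norm_sub_le_of_eq_add_smul_sub {E : Type*} [SeminormedAddCommGroup E] [NormedSpace ℝ E]
    {θ : ℝ} (hθ0 : 0 ≤ θ) (hθ1 : θ ≤ 1) {x x₀ z : E} (hz : z = x + (1 - θ) • (x - x₀)) :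
    ‖z - x‖ ≤ ‖x - x₀‖ := by
  rw [hz, add_sub_cancel_left, norm_smul, Real.norm_of_nonneg (by linarith)]
  exact mul_le_of_le_one_left (norm_nonneg _) (by linarith)

theorem sum_range_le_of_mul_sum_range_le {s : ℕ → ℝ} (hs : ∀ i, 0 ≤ s i) {n : ℕ} {c : ℝ}
    (h : (n : ℝ) * ∑ i ∈ range n, s i ≤ c) : ∑ i ∈ range n, s i ≤ c := by
  rcases Nat.eq_zero_or_pos n with rfl | hn
  · simpa using h
  · exact (le_mul_of_one_le_left (sum_nonneg fun i _ ↦ hs i) (by exact_mod_cast hn)).trans h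

section LipschitzGradient

variable {E : Type*} [NormedAddCommGroup E] [InnerProductSpace ℝ E] [CompleteSpace E]

theorem abs_sub_sub_inner_gradient_le {u : E → ℝ} {C : ℝ} (hu : Differentiable ℝ u)
    (hlip : ∀ a b, ‖gradient u a - gradient u b‖ ≤ C * ‖a - b‖) (x y : E) :
    |u y - u x - ⟪gradient u x, y - x⟫| ≤ C * ‖y - x‖ ^ 2 := by
  rcases eq_or_ne y x with rfl | hyx
  · simp
  have hC : 0 ≤ C := nonneg_of_norm_sub_le_mul_norm_sub hlip (norm_pos_iff.2 (sub_ne_zero.2 hyx))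
  have bound : ∀ v ∈ segment ℝ x y, ‖fderiv ℝ u v - fderiv ℝ u x‖ ≤ C * ‖y - x‖ := by
    intro v hv
    rw [← toDual_gradient, ← toDual_gradient, ← map_sub, LinearIsometryEquiv.norm_map]
    exact (hlip v x).trans (mul_le_mul_of_nonneg_left (norm_sub_le_of_mem_segment hv) hC)
  have := (convex_segment x y).norm_image_sub_le_of_norm_fderiv_le' (fun v _ ↦ hu v) bound
    (left_mem_segment ℝ x y) (right_mem_segment ℝ x y)
  rw [← inner_gradient_left, Real.norm_eq_abs] at this
  linarith

variable {f g : E → ℝ} {Lf Lg η : ℝ}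

theorem add_sub_add_le_inner_gradient (hf : Differentiable ℝ f) (hg : Differentiable ℝ g)
    (hflip : ∀ a b, ‖gradient f a - gradient f b‖ ≤ Lf * ‖a - b‖)
    (hglip : ∀ a b, ‖gradient g a - gradient g b‖ ≤ Lg * ‖a - b‖) (x x' z : E) :
    f x' + g x' - (f x + g x) ≤ ⟪gradient f x' + gradient g z, x' - x⟫
      + Lf * ‖x' - x‖ ^ 2 + Lg * (‖z - x'‖ ^ 2 + ‖z - x‖ ^ 2) := by
  have hfx := abs_le.1 (abs_sub_sub_inner_gradient_le hf hflip x' x)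
  have hgx' := abs_le.1 (abs_sub_sub_inner_gradient_le hg hglip z x')
  have hgx := abs_le.1 (abs_sub_sub_inner_gradient_le hg hglip z x)
  have hinner : ⟪gradient f x' + gradient g z, x' - x⟫
      = -⟪gradient f x', x - x'⟫ + (⟪gradient g z, x' - z⟫ - ⟪gradient g z, x - z⟫) := by
    simp only [inner_add_left, inner_sub_right]
    ring
  rw [norm_sub_rev x x'] at hfx
  rw [norm_sub_rev x' z] at hgx'
  rw [norm_sub_rev x z] at hgx
  linarith [hfx.1, hgx'.2, hgx.1]

theorem prox_grad_step_sufficient_decrease (hf : Differentiable ℝ f) (hg : Differentiable ℝ g)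
    (hflip : ∀ a b, ‖gradient f a - gradient f b‖ ≤ Lf * ‖a - b‖)
    (hglip : ∀ a b, ‖gradient g a - gradient g b‖ ≤ Lg * ‖a - b‖)
    (hLf : 0 ≤ Lf) (hLg : 0 ≤ Lg) (hη : 0 < η) (hηL : 8 * η * (Lf + Lg) ≤ 1)
    {x x' z : E} (hprox : (1 / η) • (z - x') = gradient f x' + gradient g z) :
    8 * η * (f x' + g x' - (f x + g x))
      ≤ 5 * ‖z - x‖ ^ 2 - 3 * ‖z - x'‖ ^ 2 - 3 * ‖x' - x‖ ^ 2 := by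
  have hdescent := add_sub_add_le_inner_gradient hf hg hflip hglip x x' z
  have hinner : η * ⟪gradient f x' + gradient g z, x' - x⟫ = ⟪z - x', x' - x⟫ := by
    rw [← hprox, real_inner_smul_left]
    field_simp
  have hthree : 2 * ⟪z - x', x' - x⟫ = ‖z - x‖ ^ 2 - ‖z - x'‖ ^ 2 - ‖x' - x‖ ^ 2 := by
    rw [← sub_add_sub_cancel z x' x, norm_add_sq_real]
    ring
  have hLf' : 8 * η * Lf ≤ 1 := by linarith [mul_nonneg hη.le hLg]
  have hLg' : 8 * η * Lg ≤ 1 := by linarith [mul_nonneg hη.le hLf]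
  linarith [mul_le_mul_of_nonneg_left hdescent (by positivity : 0 ≤ 8 * η),
    mul_le_mul_of_nonneg_right hLf' (sq_nonneg ‖x' - x‖),
    mul_le_mul_of_nonneg_right hLg' (sq_nonneg ‖z - x'‖),
    mul_le_mul_of_nonneg_right hLg' (sq_nonneg ‖z - x‖)]

variable {θ : ℝ} {K : ℕ} {x z : ℕ → E}

theorem inertial_epoch_telescope_le (hf : Differentiable ℝ f) (hg : Differentiable ℝ g)
    (hflip : ∀ a b, ‖gradient f a - gradient f b‖ ≤ Lf * ‖a - b‖)
    (hglip : ∀ a b, ‖gradient g a - gradient g b‖ ≤ Lg * ‖a - b‖)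
    (hLf : 0 ≤ Lf) (hLg : 0 ≤ Lg) (hη : 0 < η) (hηL : 8 * η * (Lf + Lg) ≤ 1)
    (hθ0 : 0 ≤ θ) (hθ1 : θ ≤ 1) (hK : 1 ≤ K)
    (hz : ∀ k < K, z k = x k + (1 - θ) • (x k - x (k - 1)))
    (hchar : ∀ k < K, (1 / η) • (z k - x (k + 1)) = gradient f (x (k + 1)) + gradient g (z k)) :
    8 * η * (f (x K) + g (x K) - (f (x 0) + g (x 0)))
      ≤ 2 * ∑ t ∈ range (K - 1), ‖x (t + 1) - x t‖ ^ 2 - 3 * ‖z (K - 1) - x K‖ ^ 2 := by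
  have hstep : ∀ k ∈ range K, 8 * η * (f (x (k + 1)) + g (x (k + 1)) - (f (x k) + g (x k)))
      ≤ 5 * ‖x k - x (k - 1)‖ ^ 2 - 3 * ‖z k - x (k + 1)‖ ^ 2 - 3 * ‖x (k + 1) - x k‖ ^ 2 := by
    intro k hk
    have hk := mem_range.1 hk
    have hzx := norm_sub_le_of_eq_add_smul_sub hθ0 hθ1 (hz k hk)
    have := prox_grad_step_sufficient_decrease (x := x k) hf hg hflip hglip hLf hLg hη hηL
      (hchar k hk)
    linarith [pow_le_pow_left₀ (norm_nonneg _) hzx 2]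
  obtain ⟨m, rfl⟩ : ∃ m, K = m + 1 := ⟨K - 1, by omega⟩
  have hA := single_le_sum (fun k _ ↦ sq_nonneg ‖z k - x (k + 1)‖) (self_mem_range_succ m)
  have hD : ∑ k ∈ range m, ‖x (k + 1) - x k‖ ^ 2 ≤ ∑ k ∈ range (m + 1), ‖x (k + 1) - x k‖ ^ 2 :=
    sum_le_sum_of_subset_of_nonneg (range_subset_range.2 m.le_succ) fun _ _ _ ↦ sq_nonneg _
  calc 8 * η * (f (x (m + 1)) + g (x (m + 1)) - (f (x 0) + g (x 0)))
      = ∑ k ∈ range (m + 1), 8 * η * (f (x (k + 1)) + g (x (k + 1)) - (f (x k) + g (x k))) := by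
        rw [← mul_sum, sum_range_sub (fun k ↦ f (x k) + g (x k))]
    _ ≤ ∑ k ∈ range (m + 1),
          (5 * ‖x k - x (k - 1)‖ ^ 2 - 3 * ‖z k - x (k + 1)‖ ^ 2 - 3 * ‖x (k + 1) - x k‖ ^ 2) :=
        sum_le_sum hstep
    _ = 5 * ∑ k ∈ range m, ‖x (k + 1) - x k‖ ^ 2 - 3 * ∑ k ∈ range (m + 1), ‖z k - x (k + 1)‖ ^ 2
          - 3 * ∑ k ∈ range (m + 1), ‖x (k + 1) - x k‖ ^ 2 := by
        rw [sum_sub_distrib, sum_sub_distrib, ← mul_sum, ← mul_sum, ← mul_sum,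
          sum_range_succ' (fun k ↦ ‖x k - x (k - 1)‖ ^ 2)]
        -- `x (0 - 1) = x 0` in `ℕ`, so the momentum term of the first step vanishes
        simp
    _ ≤ _ := by simp only [add_tsub_cancel_right]; linarith

end LipschitzGradient

theorem inertial_prox_epoch_decrease_large_gradient_mapping_general
    {d : ℕ}
    (f g : EuclideanSpace ℝ (Fin d) → ℝ) (Lf Lg L : ℝ)
    (hLdef : L = Lf + Lg)
    (hfd : Differentiable ℝ f) (hgd : Differentiable ℝ g)
    (hflip : ∀ a b : EuclideanSpace ℝ (Fin d),
      ‖gradient f a - gradient f b‖ ≤ Lf * ‖a - b‖)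
    (hglip : ∀ a b : EuclideanSpace ℝ (Fin d),
      ‖gradient g a - gradient g b‖ ≤ Lg * ‖a - b‖)
    (θ η : ℝ) (hθ0 : 0 < θ) (hθ1 : θ ≤ 1) (hη0 : 0 < η) (hη1 : η ≤ 1 / (8 * L))
    (𝒦 : ℕ) (h𝒦 : 1 ≤ 𝒦)
    (x z : ℕ → EuclideanSpace ℝ (Fin d))
    (hz : ∀ k < 𝒦, z k = x k + (1 - θ) • (x k - x (k - 1)))
    (hchar : ∀ k < 𝒦,
      (1 / η) • (z k - x (k + 1)) = gradient f (x (k + 1)) + gradient g (z k))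
    (B : ℝ) (hB : 0 < B)
    (hsum : ((𝒦 - 1 : ℕ) : ℝ)
      * ∑ t ∈ Finset.range (𝒦 - 1), ‖x (t + 1) - x t‖ ^ 2 ≤ B ^ 2)
    (hbig : B ≤ ‖z (𝒦 - 1) - x 𝒦‖) :
    (f (x 𝒦) + g (x 𝒦)) - (f (x 0) + g (x 0)) ≤ -B ^ 2 / (8 * η) := by
  have hLf := nonneg_of_norm_sub_le_mul_norm_sub hflip (hB.trans_le hbig)
  have hLg := nonneg_of_norm_sub_le_mul_norm_sub hglip (hB.trans_le hbig)
  have hL : 0 < 8 * L := one_div_pos.1 (hη0.trans_le hη1)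
  have hηL : 8 * η * (Lf + Lg) ≤ 1 := by
    rw [← hLdef]
    linarith [(le_div_iff₀ hL).1 hη1]
  have hD := sum_range_le_of_mul_sum_range_le (fun _ ↦ sq_nonneg _) hsum
  have hA := pow_le_pow_left₀ hB.le hbig 2
  have := inertial_epoch_telescope_le hfd hgd hflip hglip hLf hLg hη0 hηL hθ0.le hθ1 h𝒦 hz hchar
  rw [le_div_iff₀ (by positivity)]
  linarith

/-- Sufficient decrease along an inertial proximal epoch when the
gradient mapping at the last iterate is large
(the convention `x^{-1} = x^0` is realized by truncated subtraction on `ℕ`). -/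
theorem inertial_prox_epoch_decrease_large_gradient_mapping
    {d : ℕ} (hd : 1 ≤ d)
    (f g : EuclideanSpace ℝ (Fin d) → ℝ) (Lf Lg L : ℝ)
    (hLdef : L = Lf + Lg) (hL : 0 < L)
    (hfd : Differentiable ℝ f) (hgd : Differentiable ℝ g)
    (hflip : ∀ a b : EuclideanSpace ℝ (Fin d),
      ‖gradient f a - gradient f b‖ ≤ Lf * ‖a - b‖)
    (hglip : ∀ a b : EuclideanSpace ℝ (Fin d),
      ‖gradient g a - gradient g b‖ ≤ Lg * ‖a - b‖)
    (θ η : ℝ) (hθ0 : 0 < θ) (hθ1 : θ ≤ 1) (hη0 : 0 < η) (hη1 : η ≤ 1 / (8 * L))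
    (𝒦 : ℕ) (h𝒦 : 1 ≤ 𝒦)
    (x z : ℕ → EuclideanSpace ℝ (Fin d))
    (hz : ∀ k < 𝒦, z k = x k + (1 - θ) • (x k - x (k - 1)))
    (hchar : ∀ k < 𝒦,
      (1 / η) • (z k - x (k + 1)) = gradient f (x (k + 1)) + gradient g (z k))
    (B : ℝ) (hB : 0 < B)
    (hsum : ((𝒦 - 1 : ℕ) : ℝ)
      * ∑ t ∈ Finset.range (𝒦 - 1), ‖x (t + 1) - x t‖ ^ 2 ≤ B ^ 2)
    (hbig : B ≤ ‖z (𝒦 - 1) - x 𝒦‖) :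
    (f (x 𝒦) + g (x 𝒦)) - (f (x 0) + g (x 0)) ≤ -B ^ 2 / (8 * η) :=
  inertial_prox_epoch_decrease_large_gradient_mapping_general f g Lf Lg L hLdef hfd hgd hflip hglip
    θ η hθ0 hθ1 hη0 hη1 𝒦 h𝒦 x z hz hchar B hB hsum hbig
end

section
/- (Sufficient decrease per triggered epoch of RISP-Prox.) Let f, g : ℝ^d → ℝ be twice differentiable with f convex, ∇f L_f-Lipschitz, Hessian of f ρ_f-Lipschitz, ∇g L_g-Lipschitz, Hessian of g ρ_g-Lipschitz; set L = L_f + L_g, ρ = ρ_f + ρ_g, F = f + g. Let ε > 0, η = 1/(8L), B = (1/2)·√(ε/ρ), θ = 4·(ε·ρ·η²)^{1/4} with θ ∈ (0,1], and let K ≥ 1 be an integer with K·θ = 1. Assume every eigenvalue of ∇²g(x⁰) is at least −θ/η. Let x^{−1} = x⁰, x¹, …, x^𝒦 and z⁰, …, z^{𝒦−1} be an inertial proximal epoch with 1 ≤ 𝒦 ≤ K such that the restart criterion is reached at step 𝒦: for every k ∈ {1,…,𝒦−1}, k·Σ_{t=0}^{k−1}‖x^{t+1} − x^t‖² ≤ B²,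 and 𝒦·Σ_{t=0}^{𝒦−1}‖x^{t+1} − x^t‖² > B². Then F(x^𝒦) − F(x⁰) ≤ −(1/2)·ε^{3/2}/√ρ. -/
/-!
Compare each inertial proximal step with the potential `F(xᵏ) + ‖xᵏ - xᵏ⁻¹‖² / (2η)`.
Convexity of `f` and the optimality condition reduce one step to Bregman divergences of `g` at
the extrapolated point `zᵏ`. Before the restart every iterate stays within `B` of `x⁰`, so `g`
may be replaced by its quadratic model with Hessian `∇²g(x⁰)`: the eigenvalue bound `-θ/η` and
the `L_g`-bound on that Hessian control the model, and the Hessian-Lipschitz error is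
`O(ρB) = O(θ²/η)`. Hence the potential drops by `θ/(8η)·‖xᵏ⁺¹ - xᵏ‖²`. The last step may leave
the ball; there only `L_g`-smoothness is available, which still gives the same drop of `F` at the
price of the potential term. Summing, `F(x^𝒦) - F(x⁰) ≤ -θ/(8η) · Σ ‖xᵗ⁺¹ - xᵗ‖²`; the trigger
together with `𝒦 ≤ K = 1/θ` makes this sum exceed `θB²`, and `θ²B²/(8η) = ε^{3/2}/(2√ρ)`.
-/

open Set InnerProductSpace
open scoped RealInnerProductSpace

lemma norm_image_one_sub_zero_le_of_norm_deriv_le {F : Type*} [NormedAddCommGroup F]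
    [NormedSpace ℝ F] {φ φ' : ℝ → F} {c e : ℝ} (hφ : ∀ t, HasDerivAt φ (φ' t) t)
    (hφ' : ∀ t ∈ Icc (0 : ℝ) 1, ‖φ' t‖ ≤ c * t + e * t ^ 2) :
    ‖φ 1 - φ 0‖ ≤ c / 2 + e / 3 := by
  have hbound : ∀ t, HasDerivAt (fun t : ℝ => c / 2 * t ^ 2 + e / 3 * t ^ 3)
      (c * t + e * t ^ 2) t := fun t => by
    refine (((hasDerivAt_pow 2 t).const_mul (c / 2)).add
      ((hasDerivAt_pow 3 t).const_mul (e / 3))).congr_deriv ?_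
    push_cast; ring
  have := image_norm_le_of_norm_deriv_right_le_deriv_boundary (a := 0) (b := 1)
    (f := fun t => φ t - φ 0) (fun t _ => ((hφ t).sub_const _).continuousAt.continuousWithinAt)
    (fun t _ => ((hφ t).sub_const _).hasDerivWithinAt) (by simp) hbound
    (fun t ht => hφ' t (Ico_subset_Icc_self ht)) (right_mem_Icc.2 zero_le_one)
  simpa using this

lemma nonneg_of_forall_norm_sub_le_mul {E F : Type*} [NormedAddCommGroup E] [Nontrivial E]
    [SeminormedAddCommGroup F] {G : E → F} {C : ℝ} (h : ∀ a b, ‖G a - G b‖ ≤ C * ‖a - b‖) :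
    0 ≤ C := by
  obtain ⟨a, ha⟩ := exists_ne (0 : E)
  have hC := (norm_nonneg _).trans (h a 0)
  rw [sub_zero] at hC
  exact nonneg_of_mul_nonneg_left hC (norm_pos_iff.mpr ha)

section InnerProductSpace

variable {E : Type*} [NormedAddCommGroup E] [InnerProductSpace ℝ E]

lemma abs_inner_apply_self_le (A : E →L[ℝ] E) (v : E) : |⟪A v, v⟫| ≤ ‖A‖ * ‖v‖ ^ 2 :=
  calc |⟪A v, v⟫| ≤ ‖A v‖ * ‖v‖ := abs_real_inner_le_norm _ _
    _ ≤ ‖A‖ * ‖v‖ * ‖v‖ := by gcongr; exact A.le_opNorm v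
    _ = ‖A‖ * ‖v‖ ^ 2 := by ring

lemma norm_smul_sq_of_nonneg {s : ℝ} (hs : 0 ≤ s) (u : E) : ‖s • u‖ ^ 2 = s ^ 2 * ‖u‖ ^ 2 := by
  rw [norm_smul, Real.norm_of_nonneg hs, mul_pow]

lemma norm_sub_smul_sq_add_norm_smul_sq_le {s : ℝ} (hs0 : 0 ≤ s) (hs1 : s ≤ 1) (a u : E) :
    ‖a - s • u‖ ^ 2 + ‖s • u‖ ^ 2 ≤ 2 * ‖a‖ ^ 2 + 3 * ‖u‖ ^ 2 := by
  have hshrink : ‖s • u‖ ^ 2 ≤ ‖u‖ ^ 2 := by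
    rw [norm_smul_sq_of_nonneg hs0]
    exact mul_le_of_le_one_left (sq_nonneg _) (by nlinarith)
  have hparallel := norm_add_sq_real a (s • u)
  rw [norm_sub_sq_real]
  nlinarith [sq_nonneg ‖a + s • u‖]

lemma hasDerivAt_add_smul (y v : E) (t : ℝ) : HasDerivAt (fun s : ℝ => y + s • v) v t := by
  simpa using ((hasDerivAt_id t).smul_const v).const_add y

lemma momentum_step_decomposition {θ : ℝ} {w x y z : E} (hz : z = x + (1 - θ) • (x - w)) :
    z - x = (1 - θ) • (x - w) ∧ y - z = (y - x) - (1 - θ) • (x - w) := by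
  subst hz; constructor <;> abel

lemma momentum_quadratic_le (H : E →L[ℝ] E) {ν θ : ℝ} (hν : 0 ≤ ν) (hθ0 : 0 ≤ θ) (hθ1 : θ ≤ 1)
    (hH : ∀ v, ⟪H v, v⟫ ≤ ν / 8 * ‖v‖ ^ 2) (a u : E) (hu : -(θ * ν) * ‖u‖ ^ 2 ≤ ⟪H u, u⟫) :
    ν / 2 * (‖(1 - θ) • u‖ ^ 2 - ‖a - (1 - θ) • u‖ ^ 2 - ‖a‖ ^ 2)
      + (⟪H (a - (1 - θ) • u), a - (1 - θ) • u⟫ - ⟪H ((1 - θ) • u), (1 - θ) • u⟫) / 2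
      ≤ -(ν * ((1 + θ) / 2 - θ / 16)) * ‖a‖ ^ 2 + ν * (1 - θ ^ 2) / 2 * ‖u‖ ^ 2 := by
  have hs : 0 ≤ 1 - θ := by linarith
  have hexpand : ∀ s : ℝ, ⟪H (a - s • u), a - s • u⟫
      = ⟪H a, a⟫ - s * (⟪H a, u⟫ + ⟪H u, a⟫) + s ^ 2 * ⟪H u, u⟫ := fun s => by
    simp only [map_sub, map_smul, inner_sub_left, inner_sub_right, real_inner_smul_left,
      real_inner_smul_right]
    ring
  have hsmul : ⟪H ((1 - θ) • u), (1 - θ) • u⟫ = (1 - θ) ^ 2 * ⟪H u, u⟫ := by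
    simp only [map_smul, real_inner_smul_left, real_inner_smul_right]; ring
  -- the bound on `a - u` is what controls the cross terms `⟪H a, u⟫ + ⟪H u, a⟫`
  have hdiff : ⟪H (a - u), a - u⟫ ≤ ν * ‖a - u‖ ^ 2 := (hH _).trans (by gcongr; linarith)
  have hexpand1 := hexpand 1
  simp only [one_smul, one_mul, one_pow] at hexpand1
  rw [hexpand1, norm_sub_sq_real] at hdiff
  rw [hexpand, hsmul, norm_smul_sq_of_nonneg hs, norm_sub_sq_real, real_inner_smul_right,
    norm_smul_sq_of_nonneg hs]
  nlinarith [mul_le_mul_of_nonneg_left hdiff (by linarith : 0 ≤ (1 - θ) / 2),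
    mul_le_mul_of_nonneg_left (hH a) (by linarith : 0 ≤ θ / 2),
    mul_le_mul_of_nonneg_left hu (by linarith : 0 ≤ (1 - θ) / 2)]

lemma momentum_quadratic_le_of_lipschitz {ν θ L : ℝ} (hν : 0 ≤ ν) (hθ0 : 0 ≤ θ) (hθ1 : θ ≤ 1)
    (hL : L ≤ ν / 8) (a u : E) :
    ν / 2 * (‖(1 - θ) • u‖ ^ 2 - ‖a - (1 - θ) • u‖ ^ 2 - ‖a‖ ^ 2)
      + L / 2 * (‖a - (1 - θ) • u‖ ^ 2 + ‖(1 - θ) • u‖ ^ 2)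
      ≤ -(θ * ν / 8) * ‖a‖ ^ 2 + ν / 2 * ‖u‖ ^ 2 := by
  have hs : 0 ≤ 1 - θ := by linarith
  have hL' : L / 2 * (‖a - (1 - θ) • u‖ ^ 2 + ‖(1 - θ) • u‖ ^ 2)
      ≤ ν / 16 * (‖a - (1 - θ) • u‖ ^ 2 + ‖(1 - θ) • u‖ ^ 2) :=
    mul_le_mul_of_nonneg_right (by linarith) (by positivity)
  have hinner : ⟪a, u⟫ ≤ ‖a‖ ^ 2 + ‖u‖ ^ 2 / 4 := by
    have h := norm_sub_sq_real ((2 : ℝ) • a) u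
    rw [real_inner_smul_left, norm_smul_sq_of_nonneg zero_le_two] at h
    nlinarith [sq_nonneg ‖(2 : ℝ) • a - u‖]
  rw [norm_sub_sq_real, real_inner_smul_right, norm_smul_sq_of_nonneg hs] at hL' ⊢
  have hνs := mul_nonneg hν hs
  nlinarith [mul_le_mul_of_nonneg_left hinner hνs, mul_nonneg hν (sq_nonneg ‖a‖),
    mul_nonneg (mul_nonneg hν hθ0) (sq_nonneg ‖a‖), mul_nonneg hνs (sq_nonneg ‖u‖),
    mul_nonneg (mul_nonneg hνs hθ0) (sq_nonneg ‖u‖)]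

variable [CompleteSpace E]

lemma Differentiable.hasDerivAt_comp_add_smul {g : E → ℝ} (hg : Differentiable ℝ g)
    (y v : E) (t : ℝ) :
    HasDerivAt (fun s : ℝ => g (y + s • v)) ⟪gradient g (y + t • v), v⟫ t := by
  have hgrad := hasGradientAt_iff_hasFDerivAt.mp (hg (y + t • v)).hasGradientAt
  simpa [Function.comp_def] using hgrad.comp_hasDerivAt t (hasDerivAt_add_smul y v t)

lemma ConvexOn.add_inner_gradient_le {f : E → ℝ} (hconv : ConvexOn ℝ univ f)
    (hf : Differentiable ℝ f) (p q : E) : f p + ⟪gradient f p, q - p⟫ ≤ f q := by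
  have hline : ConvexOn ℝ univ (fun s : ℝ => f (p + s • (q - p))) := by
    have hcomp : f ∘ (AffineMap.lineMap p q : ℝ →ᵃ[ℝ] E) = fun s => f (p + s • (q - p)) := by
      ext s
      simp only [Function.comp_apply, AffineMap.lineMap_apply_module]
      congr 1
      module
    simpa [hcomp] using hconv.comp_affineMap (AffineMap.lineMap p q : ℝ →ᵃ[ℝ] E)
  have hslope := hline.le_slope_of_hasDerivAt (mem_univ 0) (mem_univ 1) one_pos
    (by simpa only [zero_smul, add_zero] using hf.hasDerivAt_comp_add_smul p (q - p) 0)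
  simp only [slope_def_field, one_smul, zero_smul, add_zero, add_sub_cancel, sub_zero, div_one]
    at hslope
  linarith

noncomputable def bregmanDiv (g : E → ℝ) (z w : E) : ℝ := g w - g z - ⟪gradient g z, w - z⟫

variable {f g : E → ℝ}

lemma abs_bregmanDiv_le (hg : Differentiable ℝ g) {L : ℝ}
    (hL : ∀ a b, ‖gradient g a - gradient g b‖ ≤ L * ‖a - b‖) (z w : E) :
    |bregmanDiv g z w| ≤ L / 2 * ‖w - z‖ ^ 2 := by
  set v := w - z
  have hφ : ∀ t, HasDerivAt (fun s : ℝ => g (z + s • v) - s * ⟪gradient g z, v⟫)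
      (⟪gradient g (z + t • v) - gradient g z, v⟫) t := fun t => by
    refine ((hg.hasDerivAt_comp_add_smul z v t).sub
      ((hasDerivAt_id t).mul_const ⟪gradient g z, v⟫)).congr_deriv ?_
    rw [inner_sub_left, one_mul]
  have key := norm_image_one_sub_zero_le_of_norm_deriv_le (c := L * ‖v‖ ^ 2) (e := 0) hφ
    fun t ht =>
      calc ‖⟪gradient g (z + t • v) - gradient g z, v⟫‖
          ≤ ‖gradient g (z + t • v) - gradient g z‖ * ‖v‖ := norm_inner_le_norm _ _
        _ ≤ L * ‖t • v‖ * ‖v‖ := by gcongr; simpa using hL (z + t • v) z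
        _ = L * ‖v‖ ^ 2 * t + 0 * t ^ 2 := by
          rw [norm_smul, Real.norm_of_nonneg ht.1]; ring
  have hw : z + v = w := add_sub_cancel z w
  simp only [one_smul, zero_smul, add_zero, hw, Real.norm_eq_abs] at key
  unfold bregmanDiv
  convert key using 2 <;> ring

lemma inner_fderiv_gradient_apply_self_le {L : ℝ} (hL0 : 0 ≤ L)
    (hL : ∀ a b, ‖gradient g a - gradient g b‖ ≤ L * ‖a - b‖) (x v : E) :
    ⟪fderiv ℝ (gradient g) x v, v⟫ ≤ L * ‖v‖ ^ 2 :=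
  calc _ ≤ ‖fderiv ℝ (gradient g) x‖ * ‖v‖ ^ 2 :=
        (le_abs_self _).trans (abs_inner_apply_self_le _ _)
    _ ≤ L * ‖v‖ ^ 2 := by
      gcongr
      exact norm_fderiv_le_of_lip' ℝ hL0 (Filter.Eventually.of_forall fun a => hL a x)

section HessianLipschitz

variable {ρ : ℝ} (hg2 : Differentiable ℝ (gradient g))
  (hH : ∀ a b, ‖fderiv ℝ (gradient g) a - fderiv ℝ (gradient g) b‖ ≤ ρ * ‖a - b‖)
include hg2 hH

lemma norm_gradient_add_sub_sub_fderiv_le (y u : E) :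
    ‖gradient g (y + u) - gradient g y - fderiv ℝ (gradient g) y u‖ ≤ ρ / 2 * ‖u‖ ^ 2 := by
  set H := fderiv ℝ (gradient g)
  have hφ : ∀ t, HasDerivAt (fun s : ℝ => gradient g (y + s • u) - s • H y u)
      (H (y + t • u) u - H y u) t := fun t => by
    refine (((hg2 _).hasFDerivAt.comp_hasDerivAt t (hasDerivAt_add_smul y u t)).sub
      ((hasDerivAt_id t).smul_const (H y u))).congr_deriv ?_
    rw [one_smul]
  have key := norm_image_one_sub_zero_le_of_norm_deriv_le (c := ρ * ‖u‖ ^ 2) (e := 0) hφ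
    fun t ht =>
      calc ‖H (y + t • u) u - H y u‖ = ‖(H (y + t • u) - H y) u‖ := rfl
        _ ≤ ‖H (y + t • u) - H y‖ * ‖u‖ := (H (y + t • u) - H y).le_opNorm u
        _ ≤ ρ * ‖t • u‖ * ‖u‖ := by gcongr; simpa using hH (y + t • u) y
        _ = ρ * ‖u‖ ^ 2 * t + 0 * t ^ 2 := by
          rw [norm_smul, Real.norm_of_nonneg ht.1]; ring
  simp only [one_smul, zero_smul, add_zero, sub_zero] at key
  rw [show ρ / 2 * ‖u‖ ^ 2 = ρ * ‖u‖ ^ 2 / 2 + 0 / 3 by ring]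
  convert key using 2
  abel

lemma abs_bregmanDiv_sub_hessian_le (hg : Differentiable ℝ g) (x₀ z w : E) :
    |bregmanDiv g z w - ⟪fderiv ℝ (gradient g) x₀ (w - z), w - z⟫ / 2|
      ≤ ρ * (‖z - x₀‖ / 2 + ‖w - z‖ / 6) * ‖w - z‖ ^ 2 := by
  set H := fderiv ℝ (gradient g)
  set v := w - z
  have hφ : ∀ t, HasDerivAt
      (fun s : ℝ => g (z + s • v) - s * ⟪gradient g z, v⟫ - s ^ 2 / 2 * ⟪H x₀ v, v⟫)
      (⟪gradient g (z + t • v) - gradient g z - H z (t • v), v⟫ + t * ⟪(H z - H x₀) v, v⟫) t :=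
    fun t => by
      refine (((hg.hasDerivAt_comp_add_smul z v t).sub
        ((hasDerivAt_id t).mul_const ⟪gradient g z, v⟫)).sub
        (((hasDerivAt_pow 2 t).div_const 2).mul_const ⟪H x₀ v, v⟫)).congr_deriv ?_
      simp only [inner_sub_left, map_smul, real_inner_smul_left, FunLike.coe_sub, Pi.sub_apply]
      push_cast; ring
  have key := norm_image_one_sub_zero_le_of_norm_deriv_le
    (c := ρ * ‖z - x₀‖ * ‖v‖ ^ 2) (e := ρ / 2 * ‖v‖ ^ 3) hφ fun t ht => by
      obtain ⟨ht0, -⟩ := ht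
      have htaylor : |⟪gradient g (z + t • v) - gradient g z - H z (t • v), v⟫|
          ≤ ρ / 2 * ‖v‖ ^ 3 * t ^ 2 :=
        calc _ ≤ ‖gradient g (z + t • v) - gradient g z - H z (t • v)‖ * ‖v‖ :=
              abs_real_inner_le_norm _ _
          _ ≤ ρ / 2 * ‖t • v‖ ^ 2 * ‖v‖ := by
              gcongr; exact norm_gradient_add_sub_sub_fderiv_le hg2 hH z (t • v)
          _ = ρ / 2 * ‖v‖ ^ 3 * t ^ 2 := by
              rw [norm_smul, Real.norm_of_nonneg ht0]; ring
      have hshift : |t * ⟪(H z - H x₀) v, v⟫| ≤ ρ * ‖z - x₀‖ * ‖v‖ ^ 2 * t :=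
        calc _ = t * |⟪(H z - H x₀) v, v⟫| := by rw [abs_mul, abs_of_nonneg ht0]
          _ ≤ t * (‖H z - H x₀‖ * ‖v‖ ^ 2) := by
              gcongr; exact abs_inner_apply_self_le (H z - H x₀) v
          _ ≤ t * (ρ * ‖z - x₀‖ * ‖v‖ ^ 2) := by gcongr; exact hH z x₀
          _ = ρ * ‖z - x₀‖ * ‖v‖ ^ 2 * t := by ring
      rw [Real.norm_eq_abs]
      linarith [abs_add_le ⟪gradient g (z + t • v) - gradient g z - H z (t • v), v⟫
        (t * ⟪(H z - H x₀) v, v⟫)]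
  have hw : z + v = w := add_sub_cancel z w
  simp only [one_smul, zero_smul, add_zero, hw, Real.norm_eq_abs] at key
  unfold bregmanDiv
  convert key using 2 <;> ring

lemma abs_bregmanDiv_sub_hessian_le_of_norm_le (hg : Differentiable ℝ g) (hρ : 0 ≤ ρ)
    {B : ℝ} {x₀ z w : E} (hz : ‖z - x₀‖ ≤ 3 * B) (hw : ‖w - x₀‖ ≤ B) :
    |bregmanDiv g z w - ⟪fderiv ℝ (gradient g) x₀ (w - z), w - z⟫ / 2|
      ≤ 13 / 6 * (ρ * B) * ‖w - z‖ ^ 2 := by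
  have hwz : ‖w - z‖ ≤ 4 * B := by
    rw [← sub_sub_sub_cancel_right w z x₀]
    linarith [norm_sub_le (w - x₀) (z - x₀)]
  refine (abs_bregmanDiv_sub_hessian_le hg2 hH hg x₀ z w).trans
    (mul_le_mul_of_nonneg_right ?_ (sq_nonneg _))
  nlinarith [mul_le_mul_of_nonneg_left hz hρ, mul_le_mul_of_nonneg_left hwz hρ]

end HessianLipschitz

section InertialStep

variable {ν θ : ℝ} {w x y z : E}

lemma prox_grad_step_sub_le (hf : Differentiable ℝ f) (hconv : ConvexOn ℝ univ f)
    (hopt : ν • (z - y) = gradient f y + gradient g z) (x : E) :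
    f y + g y - (f x + g x) ≤ ν / 2 * (‖z - x‖ ^ 2 - ‖y - z‖ ^ 2 - ‖y - x‖ ^ 2)
      + (bregmanDiv g z y - bregmanDiv g z x) := by
  have hgrad : gradient f y = ν • (z - y) - gradient g z := by rw [hopt]; abel
  have hconvex := hconv.add_inner_gradient_le hf y x
  rw [hgrad, inner_sub_left, real_inner_smul_left] at hconvex
  have hpolar : ν * ⟪z - y, x - y⟫ = ν / 2 * (‖y - z‖ ^ 2 + ‖y - x‖ ^ 2 - ‖z - x‖ ^ 2) := by
    rw [← sub_sub_sub_cancel_right z x y, norm_sub_sq_real (z - y) (x - y), norm_sub_rev y z,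
      norm_sub_rev y x]
    ring
  have hlin : ⟪gradient g z, x - y⟫ = ⟪gradient g z, x - z⟫ - ⟪gradient g z, y - z⟫ := by
    rw [← inner_sub_right, sub_sub_sub_cancel_right]
  unfold bregmanDiv
  linarith

variable (hf : Differentiable ℝ f) (hconv : ConvexOn ℝ univ f) (hg : Differentiable ℝ g)
  {Lg : ℝ} (hglip : ∀ a b, ‖gradient g a - gradient g b‖ ≤ Lg * ‖a - b‖) (hLg : Lg ≤ ν / 8)
  (hν : 0 ≤ ν) (hθ0 : 0 ≤ θ) (hθ1 : θ ≤ 1)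
  (hz : z = x + (1 - θ) • (x - w)) (hopt : ν • (z - y) = gradient f y + gradient g z)
include hf hconv hg hglip hLg hν hθ0 hθ1 hz hopt

lemma inertial_prox_step_sub_le :
    f y + g y - (f x + g x) ≤ -(θ * ν / 8) * ‖y - x‖ ^ 2 + ν / 2 * ‖x - w‖ ^ 2 := by
  obtain ⟨hzx, hyz⟩ := momentum_step_decomposition (y := y) hz
  have hstep := prox_grad_step_sub_le hf hconv hopt x
  have hy := abs_le.mp (abs_bregmanDiv_le hg hglip z y)
  have hx := abs_le.mp (abs_bregmanDiv_le hg hglip z x)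
  rw [norm_sub_rev x z, hzx] at hx
  rw [hzx, hyz] at hstep
  rw [hyz] at hy
  linarith [momentum_quadratic_le_of_lipschitz hν hθ0 hθ1 hLg (y - x) (x - w)]

lemma inertial_prox_step_potential_sub_le (hg2 : Differentiable ℝ (gradient g)) (hLg0 : 0 ≤ Lg)
    {ρ B : ℝ} (hH : ∀ a b, ‖fderiv ℝ (gradient g) a - fderiv ℝ (gradient g) b‖ ≤ ρ * ‖a - b‖)
    (hρ : 0 ≤ ρ) (hρB : ρ * B ≤ θ ^ 2 * ν / 32)
    {x₀ : E} (heig : ∀ v, -(θ * ν) * ‖v‖ ^ 2 ≤ ⟪fderiv ℝ (gradient g) x₀ v, v⟫)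
    (hw : ‖w - x₀‖ ≤ B) (hx : ‖x - x₀‖ ≤ B) (hy : ‖y - x₀‖ ≤ B) :
    f y + g y - (f x + g x)
      ≤ -(θ * ν / 8) * ‖y - x‖ ^ 2 - ν / 2 * ‖y - x‖ ^ 2 + ν / 2 * ‖x - w‖ ^ 2 := by
  set H := fderiv ℝ (gradient g) x₀
  obtain ⟨hzx, hyz⟩ := momentum_step_decomposition (y := y) hz
  have hs : 0 ≤ 1 - θ := by linarith
  have hzB : ‖z - x₀‖ ≤ 3 * B := by
    have hmom : ‖(1 - θ) • (x - w)‖ ≤ 2 * B := by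
      rw [norm_smul, Real.norm_of_nonneg hs, ← sub_sub_sub_cancel_right x w x₀]
      nlinarith [norm_sub_le (x - x₀) (w - x₀), norm_nonneg (x - x₀ - (w - x₀))]
    rw [← sub_add_sub_cancel z x x₀, hzx]
    linarith [norm_add_le ((1 - θ) • (x - w)) (x - x₀)]
  have htaylor : ∀ p, ‖p - x₀‖ ≤ B →
      |bregmanDiv g z p - ⟪H (p - z), p - z⟫ / 2| ≤ 13 * θ ^ 2 * ν / 192 * ‖p - z‖ ^ 2 :=
    fun p hp => (abs_bregmanDiv_sub_hessian_le_of_norm_le hg2 hH hg hρ hzB hp).trans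
      (by gcongr; linarith)
  have hHquad : ∀ v, ⟪H v, v⟫ ≤ ν / 8 * ‖v‖ ^ 2 := fun v =>
    (inner_fderiv_gradient_apply_self_le hLg0 hglip x₀ v).trans (by gcongr)
  have hquad := momentum_quadratic_le H hν hθ0 hθ1 hHquad (y - x) (x - w) (heig _)
  have hstep := prox_grad_step_sub_le hf hconv hopt x
  have hty := abs_le.mp (htaylor y hy)
  have htx := abs_le.mp (htaylor x hx)
  have hxz : x - z = -((1 - θ) • (x - w)) := by rw [← hzx, neg_sub]
  rw [hxz, map_neg, inner_neg_neg, norm_neg] at htx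
  rw [hzx, hyz] at hstep
  rw [hyz] at hty
  have hsum := norm_sub_smul_sq_add_norm_smul_sq_le hs (by linarith) (y - x) (x - w)
  have hνθp := mul_nonneg (mul_nonneg hν hθ0) (sq_nonneg ‖y - x‖)
  nlinarith [mul_le_mul_of_nonneg_left hsum (by positivity : 0 ≤ 13 * θ ^ 2 * ν / 192),
    mul_nonneg hνθp hs, mul_nonneg (mul_nonneg hν (sq_nonneg θ)) (sq_nonneg ‖x - w‖)]

end InertialStep

end InnerProductSpace

lemma norm_sub_le_of_mul_sum_sq_le {E : Type*} [SeminormedAddCommGroup E] (x : ℕ → E) {k : ℕ}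
    {B : ℝ} (hB : 0 ≤ B) (h : k * ∑ t ∈ Finset.range k, ‖x (t + 1) - x t‖ ^ 2 ≤ B ^ 2) :
    ‖x k - x 0‖ ≤ B := by
  have hpath : ‖x k - x 0‖ ≤ ∑ t ∈ Finset.range k, ‖x (t + 1) - x t‖ := by
    rw [← Finset.sum_range_sub]; exact norm_sum_le _ _
  have hcs := sq_sum_le_card_mul_sum_sq (s := Finset.range k) (f := fun t => ‖x (t + 1) - x t‖)
  rw [Finset.card_range] at hcs
  exact hpath.trans (le_of_sq_le_sq (hcs.trans h) hB)

lemma sub_le_neg_mul_sum_of_potential_descent {F q : ℕ → ℝ} {α c : ℝ} {m : ℕ} (hq0 : q 0 = 0)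
    (hstep : ∀ k < m, F (k + 1) - F k ≤ -α * q (k + 1) - c * q (k + 1) + c * q k)
    (hlast : F (m + 1) - F m ≤ -α * q (m + 1) + c * q m) :
    F (m + 1) - F 0 ≤ -α * ∑ k ∈ Finset.range (m + 1), q (k + 1) := by
  have hpotential : ∀ n ≤ m, F n + c * q n - F 0 ≤ -α * ∑ k ∈ Finset.range n, q (k + 1) := by
    intro n hn
    induction n with
    | zero => simp [hq0]
    | succ n ih =>
      rw [Finset.sum_range_succ]
      linarith [ih (by omega), hstep n (by omega)]
  rw [Finset.sum_range_succ]
  linarith [hpotential m le_rfl]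

lemma risp_theta_sq_div_eta {ε ρ η θ : ℝ} (hε : 0 ≤ ε) (hρ : 0 ≤ ρ) (hη : 0 < η)
    (hθ : θ = 4 * (ε * ρ * η ^ 2) ^ ((1 : ℝ) / 4)) : θ ^ 2 * (1 / η) = 16 * √(ε * ρ) := by
  have hsq : ((ε * ρ * η ^ 2) ^ ((1 : ℝ) / 4)) ^ 2 = √(ε * ρ * η ^ 2) := by
    rw [← Real.rpow_natCast, ← Real.rpow_mul (by positivity), Real.sqrt_eq_rpow]; norm_num
  rw [hθ, mul_pow, hsq, Real.sqrt_mul (by positivity), Real.sqrt_sq hη.le]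
  field_simp
  ring

lemma risp_rho_mul_B {ε ρ η B θ : ℝ} (hρ : 0 < ρ) (hB : B = 1 / 2 * √(ε / ρ))
    (hθη : θ ^ 2 * (1 / η) = 16 * √(ε * ρ)) : ρ * B = θ ^ 2 * (1 / η) / 32 := by
  rw [hB, hθη, show ε * ρ = ε / ρ * ρ ^ 2 by field_simp, Real.sqrt_mul' _ (sq_nonneg ρ),
    Real.sqrt_sq hρ.le]
  ring

lemma risp_decrease_constant {ε ρ η B θ : ℝ} (hε : 0 ≤ ε) (hρ : 0 < ρ)
    (hB : B = 1 / 2 * √(ε / ρ)) (hθη : θ ^ 2 * (1 / η) = 16 * √(ε * ρ)) :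
    θ * (1 / η) / 8 * (θ * B ^ 2) = 1 / 2 * ε ^ ((3 : ℝ) / 2) / √ρ := by
  have hsqrtρ : 0 < √ρ := Real.sqrt_pos.mpr hρ
  have h32 : ε ^ ((3 : ℝ) / 2) = ε * √ε := by
    rw [show ((3 : ℝ) / 2) = 1 + 1 / 2 by norm_num, Real.rpow_add' hε (by norm_num),
      Real.rpow_one, ← Real.sqrt_eq_rpow]
  calc θ * (1 / η) / 8 * (θ * B ^ 2) = θ ^ 2 * (1 / η) * B ^ 2 / 8 := by ring
    _ = 16 * (√ε * √ρ) * (ε / √ρ ^ 2 / 4) / 8 := by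
      rw [hθη, hB, mul_pow, Real.sq_sqrt (div_nonneg hε hρ.le), Real.sqrt_mul hε,
        Real.sq_sqrt hρ.le]
      ring
    _ = 1 / 2 * ε ^ ((3 : ℝ) / 2) / √ρ := by
      rw [h32]; field_simp; ring

/-- The convention `x^{-1} = x^0` is realized by truncated subtraction on `ℕ`. -/
theorem risp_prox_triggered_epoch_decrease_general
    {d : ℕ} (hd : 1 ≤ d)
    (f g : EuclideanSpace ℝ (Fin d) → ℝ) (Lf Lg L ρf ρg ρ : ℝ)
    (hLdef : L = Lf + Lg) (hρdef : ρ = ρf + ρg) (hL : 0 < L) (hρ : 0 < ρ)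
    (hfd : Differentiable ℝ f)
    (hgd : Differentiable ℝ g) (hgd2 : Differentiable ℝ (gradient g))
    (hfconv : ConvexOn ℝ Set.univ f)
    (hflip : ∀ a b : EuclideanSpace ℝ (Fin d),
      ‖gradient f a - gradient f b‖ ≤ Lf * ‖a - b‖)
    (hglip : ∀ a b : EuclideanSpace ℝ (Fin d),
      ‖gradient g a - gradient g b‖ ≤ Lg * ‖a - b‖)
    (hfHess : ∀ a b : EuclideanSpace ℝ (Fin d),
      ‖fderiv ℝ (gradient f) a - fderiv ℝ (gradient f) b‖ ≤ ρf * ‖a - b‖)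
    (hgHess : ∀ a b : EuclideanSpace ℝ (Fin d),
      ‖fderiv ℝ (gradient g) a - fderiv ℝ (gradient g) b‖ ≤ ρg * ‖a - b‖)
    (ε η B θ : ℝ) (hε : 0 < ε)
    (hη : η = 1 / (8 * L))
    (hB : B = (1 / 2) * Real.sqrt (ε / ρ))
    (hθ : θ = 4 * (ε * ρ * η ^ 2) ^ ((1 : ℝ) / 4))
    (hθ0 : 0 < θ) (hθ1 : θ ≤ 1)
    (K : ℕ) (hKθ : (K : ℝ) * θ = 1)
    (𝒦 : ℕ) (h𝒦1 : 1 ≤ 𝒦) (h𝒦K : 𝒦 ≤ K)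
    (x z : ℕ → EuclideanSpace ℝ (Fin d))
    (heig : ∀ v : EuclideanSpace ℝ (Fin d),
      -(θ / η) * ‖v‖ ^ 2 ≤ (inner ℝ (fderiv ℝ (gradient g) (x 0) v) v : ℝ))
    (hz : ∀ k < 𝒦, z k = x k + (1 - θ) • (x k - x (k - 1)))
    (hchar : ∀ k < 𝒦,
      (1 / η) • (z k - x (k + 1)) = gradient f (x (k + 1)) + gradient g (z k))
    (hno_early : ∀ k, 1 ≤ k → k < 𝒦 →
      (k : ℝ) * ∑ t ∈ Finset.range k, ‖x (t + 1) - x t‖ ^ 2 ≤ B ^ 2)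
    (htrigger : B ^ 2 < (𝒦 : ℝ) * ∑ t ∈ Finset.range 𝒦, ‖x (t + 1) - x t‖ ^ 2) :
    (f (x 𝒦) + g (x 𝒦)) - (f (x 0) + g (x 0)) ≤
      -(1 / 2) * ε ^ ((3 : ℝ) / 2) / Real.sqrt ρ := by
  have hη0 : 0 < η := by rw [hη]; positivity
  have : Nonempty (Fin d) := ⟨⟨0, hd⟩⟩
  have hLg : Lg ≤ 1 / η / 8 := by
    rw [hη]; field_simp; linarith [nonneg_of_forall_norm_sub_le_mul hflip]
  have hθη := risp_theta_sq_div_eta hε.le hρ.le hη0 hθ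
  have hB0 : 0 ≤ B := by rw [hB]; positivity
  have hρB : ρg * B ≤ θ ^ 2 * (1 / η) / 32 := by
    rw [← risp_rho_mul_B hρ hB hθη]
    gcongr
    linarith [nonneg_of_forall_norm_sub_le_mul hfHess]
  have hball : ∀ j < 𝒦, ‖x j - x 0‖ ≤ B := fun j hj => by
    refine norm_sub_le_of_mul_sum_sq_le x hB0 ?_
    rcases Nat.eq_zero_or_pos j with rfl | hj1
    · simpa using sq_nonneg B
    · exact hno_early j hj1 hj
  obtain ⟨m, rfl⟩ : ∃ m, 𝒦 = m + 1 := ⟨𝒦 - 1, by omega⟩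
  have hdecrease := sub_le_neg_mul_sum_of_potential_descent
    (F := fun k => f (x k) + g (x k)) (q := fun k => ‖x k - x (k - 1)‖ ^ 2) (by simp)
    (fun k hk => inertial_prox_step_potential_sub_le hfd hfconv hgd hglip hLg (by positivity)
      hθ0.le hθ1 (hz k (by omega)) (hchar k (by omega)) hgd2
      (nonneg_of_forall_norm_sub_le_mul hglip) hgHess (nonneg_of_forall_norm_sub_le_mul hgHess)
      hρB (by simpa only [mul_one_div] using heig) (hball _ (by omega)) (hball _ (by omega))
      (hball _ (by omega)))
    (inertial_prox_step_sub_le hfd hfconv hgd hglip hLg (by positivity) hθ0.le hθ1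
      (hz m (by omega)) (hchar m (by omega)))
  simp only [Nat.add_sub_cancel] at hdecrease
  have htriggered : θ * B ^ 2 ≤ ∑ t ∈ Finset.range (m + 1), ‖x (t + 1) - x t‖ ^ 2 := by
    have h𝒦θ : ((m + 1 : ℕ) : ℝ) * θ ≤ 1 := hKθ ▸ by gcongr
    nlinarith [Finset.sum_nonneg fun t (_ : t ∈ Finset.range (m + 1)) =>
      sq_nonneg ‖x (t + 1) - x t‖]
  calc _ ≤ -(θ * (1 / η) / 8) * ∑ t ∈ Finset.range (m + 1), ‖x (t + 1) - x t‖ ^ 2 := hdecrease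
    _ ≤ -(θ * (1 / η) / 8) * (θ * B ^ 2) :=
      mul_le_mul_of_nonpos_left htriggered (neg_nonpos.mpr (by positivity))
    _ = _ := by rw [neg_mul, risp_decrease_constant hε.le hρ hB hθη]; ring

/-- Sufficient decrease per triggered epoch of RISP-Prox
(the convention `x^{-1} = x^0` is realized by truncated subtraction on `ℕ`). -/
theorem risp_prox_triggered_epoch_decrease
    {d : ℕ} (hd : 1 ≤ d)
    (f g : EuclideanSpace ℝ (Fin d) → ℝ) (Lf Lg L ρf ρg ρ : ℝ)
    (hLdef : L = Lf + Lg) (hρdef : ρ = ρf + ρg) (hL : 0 < L) (hρ : 0 < ρ)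
    (hfd : Differentiable ℝ f) (hfd2 : Differentiable ℝ (gradient f))
    (hgd : Differentiable ℝ g) (hgd2 : Differentiable ℝ (gradient g))
    (hfconv : ConvexOn ℝ Set.univ f)
    (hflip : ∀ a b : EuclideanSpace ℝ (Fin d),
      ‖gradient f a - gradient f b‖ ≤ Lf * ‖a - b‖)
    (hglip : ∀ a b : EuclideanSpace ℝ (Fin d),
      ‖gradient g a - gradient g b‖ ≤ Lg * ‖a - b‖)
    (hfHess : ∀ a b : EuclideanSpace ℝ (Fin d),
      ‖fderiv ℝ (gradient f) a - fderiv ℝ (gradient f) b‖ ≤ ρf * ‖a - b‖)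
    (hgHess : ∀ a b : EuclideanSpace ℝ (Fin d),
      ‖fderiv ℝ (gradient g) a - fderiv ℝ (gradient g) b‖ ≤ ρg * ‖a - b‖)
    (ε η B θ : ℝ) (hε : 0 < ε)
    (hη : η = 1 / (8 * L))
    (hB : B = (1 / 2) * Real.sqrt (ε / ρ))
    (hθ : θ = 4 * (ε * ρ * η ^ 2) ^ ((1 : ℝ) / 4))
    (hθ0 : 0 < θ) (hθ1 : θ ≤ 1)
    (K : ℕ) (hK1 : 1 ≤ K) (hKθ : (K : ℝ) * θ = 1)
    (𝒦 : ℕ) (h𝒦1 : 1 ≤ 𝒦) (h𝒦K : 𝒦 ≤ K)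
    (x z : ℕ → EuclideanSpace ℝ (Fin d))
    (heig : ∀ v : EuclideanSpace ℝ (Fin d),
      -(θ / η) * ‖v‖ ^ 2 ≤ (inner ℝ (fderiv ℝ (gradient g) (x 0) v) v : ℝ))
    (hz : ∀ k < 𝒦, z k = x k + (1 - θ) • (x k - x (k - 1)))
    (hchar : ∀ k < 𝒦,
      (1 / η) • (z k - x (k + 1)) = gradient f (x (k + 1)) + gradient g (z k))
    (hno_early : ∀ k, 1 ≤ k → k < 𝒦 →
      (k : ℝ) * ∑ t ∈ Finset.range k, ‖x (t + 1) - x t‖ ^ 2 ≤ B ^ 2)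
    (htrigger : B ^ 2 < (𝒦 : ℝ) * ∑ t ∈ Finset.range 𝒦, ‖x (t + 1) - x t‖ ^ 2) :
    (f (x 𝒦) + g (x 𝒦)) - (f (x 0) + g (x 0)) ≤
      -(1 / 2) * ε ^ ((3 : ℝ) / 2) / Real.sqrt ρ :=
  risp_prox_triggered_epoch_decrease_general hd f g Lf Lg L ρf ρg ρ hLdef hρdef hL hρ hfd hgd hgd2
    hfconv hflip hglip hfHess hgHess ε η B θ hε hη hB hθ hθ0 hθ1 K hKθ 𝒦 h𝒦1 h𝒦K x z heig hz hchar
    hno_early htrigger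
end
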